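/- For d ≥ 3, the constant K_Nem(d,∞) := inf_{q ≥ 2} (q-1) d^{2/q} satisfies K_Nem(d,∞) ≤ 2e log d − e, and for all d ≥ 1, K_Nem(d,∞) ≥ 2e log d − 3e. -/

import Mathlib

/-- K_Nem(d,∞) = inf_{q ≥ 2} (q-1) d^{2/q}. -/
noncomputable def KNemInf (d : ℕ) : ℝ :=
  sInf ((fun q : ℝ => (q - 1) * (d : ℝ) ^ (2 / q)) '' Set.Ici 2)

/-!
Writing `L = log d` and `x = 2L/q`, the quantity is `(q - 1) e^x`, and the choice `q = 2L`
(so `x = 1`) gives the upper bound `(2L - 1) e`. For the lower bound use the tangent line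
`e x ≤ e^x` at `x = 1`: when `x ≤ 3` it gives `(q - 1) e^x ≥ (q - 1) e x = 2eL - e x ≥ 2eL - 3e`,
and when `x ≥ 3` the stronger `2 e x ≤ e^x` together with `2 (q - 1) ≥ q` gives
`(q - 1) e^x ≥ e q x = 2eL`.
-/

open Real

lemma exp_one_mul_le_exp (x : ℝ) : exp 1 * x ≤ exp x := by
  have h := add_one_le_exp (x - 1)
  calc exp 1 * x = exp 1 * (x - 1 + 1) := by ring
    _ ≤ exp 1 * exp (x - 1) := by gcongr
    _ = exp x := by rw [← exp_add]; ring_nf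

lemma two_mul_exp_one_mul_le_exp {x : ℝ} (hx : 3 ≤ x) : 2 * exp 1 * x ≤ exp x := by
  have he : 2.7 < exp 1 := lt_trans (by norm_num) exp_one_gt_d9
  have hsq : 6 ≤ exp 1 ^ 2 := by nlinarith
  have h := add_one_le_exp (x - 3)
  calc 2 * exp 1 * x ≤ exp 1 * (exp 1 ^ 2 * (x - 2)) := by
        have : 2 * x ≤ exp 1 ^ 2 * (x - 2) := by nlinarith
        nlinarith [exp_pos 1]
    _ ≤ exp 1 * (exp 1 ^ 2 * exp (x - 3)) := by gcongr; linarith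
    _ = exp x := by rw [← exp_nat_mul, ← exp_add, ← exp_add]; ring_nf

lemma two_mul_exp_one_mul_sub_le_mul_exp (L : ℝ) {q : ℝ} (hq : 2 ≤ q) :
    2 * exp 1 * L - 3 * exp 1 ≤ (q - 1) * exp (2 * L / q) := by
  set x := 2 * L / q with hx
  have hqx : q * x = 2 * L := by rw [hx]; field_simp
  rcases le_total x 3 with hx3 | hx3
  · calc 2 * exp 1 * L - 3 * exp 1 ≤ (q - 1) * (exp 1 * x) := by nlinarith [exp_pos 1]
      _ ≤ (q - 1) * exp x := mul_le_mul_of_nonneg_left (exp_one_mul_le_exp x) (by linarith)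
  · calc 2 * exp 1 * L - 3 * exp 1 ≤ (q - 1) * (2 * exp 1 * x) := by
          nlinarith [exp_pos 1, mul_nonneg (mul_nonneg (exp_pos 1).le (by linarith : 0 ≤ x))
            (by linarith : 0 ≤ q - 2)]
      _ ≤ (q - 1) * exp x :=
        mul_le_mul_of_nonneg_left (two_mul_exp_one_mul_le_exp hx3) (by linarith)

lemma KNemInf_le (d : ℕ) {q : ℝ} (hq : 2 ≤ q) : KNemInf d ≤ (q - 1) * (d : ℝ) ^ (2 / q) := by
  refine csInf_le ⟨0, ?_⟩ ⟨q, hq, rfl⟩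
  rintro _ ⟨p, hp, rfl⟩
  have : (2 : ℝ) ≤ p := hp
  exact mul_nonneg (by linarith) (by positivity)

lemma le_KNemInf (d : ℕ) {c : ℝ} (h : ∀ q : ℝ, 2 ≤ q → c ≤ (q - 1) * (d : ℝ) ^ (2 / q)) :
    c ≤ KNemInf d := by
  refine le_csInf ⟨_, 2, Set.self_mem_Ici, rfl⟩ ?_
  rintro _ ⟨q, hq, rfl⟩
  exact h q hq

/-- For d ≥ 3, K_Nem(d,∞) ≤ 2e log d − e, and for all d ≥ 1,
K_Nem(d,∞) ≥ 2e log d − 3e. -/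
theorem stmt7 (d : ℕ) :
    (3 ≤ d → KNemInf d ≤ 2 * Real.exp 1 * Real.log d - Real.exp 1) ∧
      (1 ≤ d → 2 * Real.exp 1 * Real.log d - 3 * Real.exp 1 ≤ KNemInf d) := by
  constructor
  · intro hd
    have hd3 : (3 : ℝ) ≤ d := by exact_mod_cast hd
    have hlog : 1 ≤ log d := by
      rw [le_log_iff_exp_le (by linarith)]
      linarith [exp_one_lt_three]
    have hpow : (d : ℝ) ^ (2 / (2 * log d)) = exp 1 := by
      rw [div_mul_cancel_left₀ two_ne_zero, rpow_inv_log (by linarith) (by linarith)]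
    calc KNemInf d ≤ (2 * log d - 1) * (d : ℝ) ^ (2 / (2 * log d)) := KNemInf_le d (by linarith)
      _ = 2 * exp 1 * log d - exp 1 := by rw [hpow]; ring
  · intro hd
    have hd0 : (0 : ℝ) < d := by exact_mod_cast hd
    refine le_KNemInf d fun q hq => ?_
    rw [rpow_def_of_pos hd0, mul_div_assoc', mul_comm (log d)]
    exact two_mul_exp_one_mul_sub_le_mul_exp (log d) hq
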